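/- arXiv:2405.18273 — 3 statements merged into one kernel-verified Lean document; each statement's English description precedes it below -/
import Mathlib

section
/- Let n ≥ 5 and fix τ ∈ [0, cos(2π/5)) with τ ∉ {cos(2π(i−1)/n) : i = 1,…,n}. There exists ε_{n,τ} > 0 such that for every ε ∈ (0, ε_{n,τ}], with φ(t) = ε·log(1 + e^{(t−τ)/ε}) and W = 1_n 1_nᵀ, the regular n-gon configuration X (with x_i = (cos(2π(i−1)/n), sin(2π(i−1)/n))) is critical for f, and the Laplacian L(M) with m_ij = h(x_iᵀx_j), h(t) = tφ'(t) − (1−t²)φ''(t), is positive semidefinite with kernel exactly span(1_n) (i.e., the Hessian of f at X is negative definite modulo the trivial rotational zero mode). -/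
open Matrix

noncomputable section

/-- Frobenius inner product `⟨A,B⟩ = ∑ᵢⱼ Aᵢⱼ Bᵢⱼ`. -/
def frob {ι κ : Type*} [Fintype ι] [Fintype κ] (A B : Matrix ι κ ℝ) : ℝ :=
  ∑ i, ∑ j, A i j * B i j

/-- `ddiag` zeroes out all off-diagonal entries of a square matrix. -/
def ddiag {ι : Type*} [Fintype ι] [DecidableEq ι] (M : Matrix ι ι ℝ) : Matrix ι ι ℝ :=
  Matrix.diagonal fun i => M i i

/-- Graph Laplacian `L(M) = diag(M 1) − M`. -/
def lap {ι : Type*} [Fintype ι] [DecidableEq ι] (M : Matrix ι ι ℝ) : Matrix ι ι ℝ :=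
  Matrix.diagonal (fun i => ∑ j, M i j) - M

/-- `X` has unit-norm columns. -/
def unitCols {d : ℕ} {ι : Type*} [Fintype ι] (X : Matrix (Fin d) ι ℝ) : Prop :=
  ∀ j, ∑ i, X i j ^ 2 = 1

/-- `A = W ⊙ φ'(XᵀX)` (`d1` playing the role of `φ'`). -/
def Amat {d : ℕ} {ι : Type*} [Fintype ι] (W : Matrix ι ι ℝ) (X : Matrix (Fin d) ι ℝ)
    (d1 : ℝ → ℝ) : Matrix ι ι ℝ :=
  Matrix.hadamard W ((Xᵀ * X).map d1)

/-- `S = ddiag(XᵀXA) − A`. -/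
def Smat {d : ℕ} {ι : Type*} [Fintype ι] [DecidableEq ι] (W : Matrix ι ι ℝ)
    (X : Matrix (Fin d) ι ℝ) (d1 : ℝ → ℝ) : Matrix ι ι ℝ :=
  ddiag ((Xᵀ * X) * Amat W X d1) - Amat W X d1

/-- First-order criticality: `X S = 0`, i.e. `X·ddiag(XᵀXA) = XA`
(vanishing Riemannian gradient on the product of spheres). -/
def IsCritical {d : ℕ} {ι : Type*} [Fintype ι] [DecidableEq ι] (W : Matrix ι ι ℝ)
    (X : Matrix (Fin d) ι ℝ) (d1 : ℝ → ℝ) : Prop :=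
  X * Smat W X d1 = 0

/-- The Riemannian Hessian quadratic form of `f` at `X` is negative semidefinite:
`−⟨ẊᵀẊ, S⟩ + (1/2)⟨(XᵀẊ + ẊᵀX)^{⊙2}, W ⊙ φ''(XᵀX)⟩ ≤ 0` for all tangent `Ẋ`. -/
def HessNegSemidef {d : ℕ} {ι : Type*} [Fintype ι] [DecidableEq ι] (W : Matrix ι ι ℝ)
    (X : Matrix (Fin d) ι ℝ) (d1 d2 : ℝ → ℝ) : Prop :=
  ∀ V : Matrix (Fin d) ι ℝ, (∀ j, (Xᵀ * V) j j = 0) →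
    -(frob (Vᵀ * V) (Smat W X d1))
      + (1 / 2) * frob ((Xᵀ * V + Vᵀ * X).map fun t => t ^ 2)
          (Matrix.hadamard W ((Xᵀ * X).map d2)) ≤ 0

/-- The graph with an edge `{i,j}` whenever `w_ij > 0` is connected. -/
def ConnectedW {ι : Type*} (W : Matrix ι ι ℝ) : Prop :=
  (SimpleGraph.fromRel fun i j => 0 < W i j).Connected

/-- `f(Y) = (1/2)⟨W, φ(YᵀY)⟩`. -/
def fval {d : ℕ} {ι : Type*} [Fintype ι] (W : Matrix ι ι ℝ) (φ : ℝ → ℝ)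
    (Y : Matrix (Fin d) ι ℝ) : ℝ :=
  (1 / 2) * frob W ((Yᵀ * Y).map φ)

/-- `h(t) = tφ'(t) − (1−t²)φ''(t)`. -/
def hfun (d1 d2 : ℝ → ℝ) (t : ℝ) : ℝ := t * d1 t - (1 - t ^ 2) * d2 t

/-- The matrix `M` with `m_ij = w_ij · h(x_iᵀx_j)`. -/
def Mmat {d : ℕ} {ι : Type*} [Fintype ι] (W : Matrix ι ι ℝ) (X : Matrix (Fin d) ι ℝ)
    (d1 d2 : ℝ → ℝ) : Matrix ι ι ℝ :=
  Matrix.of fun i j => W i j * hfun d1 d2 ((Xᵀ * X) i j)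

/-- The kernel of `L` is exactly `span(1)`. -/
def KernelIsConst {ι : Type*} [Fintype ι] [DecidableEq ι] (L : Matrix ι ι ℝ) : Prop :=
  ∀ α : ι → ℝ, L.mulVec α = 0 ↔ ∃ c : ℝ, ∀ k, α k = c

/-- The regular `n`-gon configuration on the unit circle. -/
def ngon (n : ℕ) : Matrix (Fin 2) (Fin n) ℝ :=
  Matrix.of fun a j =>
    if a = 0 then Real.cos (2 * Real.pi * (j : ℝ) / (n : ℝ))
    else Real.sin (2 * Real.pi * (j : ℝ) / (n : ℝ))

/-- The log-sum-exp smoothing `φ_{ε,τ}(t) = ε·log(1 + e^{(t−τ)/ε})` of the ReLU. -/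
def philse (ε τ : ℝ) : ℝ → ℝ := fun t => ε * Real.log (1 + Real.exp ((t - τ) / ε))


/-!
Only the Gram entries `cos (2π (i - j) / n)` enter, so the `n`-gon is invariant under the cyclic
shift `k ↦ k + 1`; reindexing by the reflection `k ↦ -k` kills the tangential part of every
gradient row, whence criticality for every `φ'`. With `φ' = σ((t - τ)/ε)` and
`φ'' = σ(1 - σ)/ε ≤ 2ε/(t - τ)²` (from `e^{-|s|} ≤ 2/s²`), the weight `h(x_iᵀx_j)` is at least
`cos(2π/5)/4` on the cycle edges `i ~ i + 1`, where `x_iᵀx_{i+1} = cos(2π/n) > τ`, and at least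
`-4ε/a²` everywhere, `a` being the distance from `τ` to the Gram entries. A symmetric Laplacian whose
cycle weights exceed `n³` times the negative weights is positive semidefinite with kernel the
constants, because `(x_i - x_j)² ≤ n ∑_k (x_k - x_{k+1})²` along the cycle.
-/

open Real

theorem Real.exp_neg_le_two_div_sq {a x : ℝ} (ha : 0 < a) (hax : a ≤ x) :
    exp (-x) ≤ 2 / a ^ 2 := by
  have hx : a ^ 2 / 2 ≤ exp x := by
    have := Real.pow_div_factorial_le_exp x (ha.le.trans hax) 2
    norm_num [Nat.factorial] at this
    nlinarith
  rw [exp_neg, inv_le_comm₀ (exp_pos x) (by positivity), inv_div]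
  exact hx

theorem Real.sigmoid_le_exp (s : ℝ) : sigmoid s ≤ exp s := by
  rw [sigmoid_def, ← inv_inv (exp s), ← exp_neg]
  exact inv_anti₀ (exp_pos _) (le_add_of_nonneg_left zero_le_one)

theorem Real.sigmoid_mul_one_sub_sigmoid_le (s : ℝ) :
    sigmoid s * (1 - sigmoid s) ≤ exp (-|s|) := by
  rw [← sigmoid_neg]
  rcases le_total 0 s with hs | hs
  · rw [abs_of_nonneg hs]
    calc sigmoid s * sigmoid (-s) ≤ 1 * exp (-s) :=
          mul_le_mul (sigmoid_le_one s) (sigmoid_le_exp _) (sigmoid_nonneg _) zero_le_one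
      _ = exp (-s) := one_mul _
  · rw [abs_of_nonpos hs, neg_neg]
    calc sigmoid s * sigmoid (-s) ≤ exp s * 1 :=
          mul_le_mul (sigmoid_le_exp s) (sigmoid_le_one _) (sigmoid_nonneg _) (exp_pos s).le
      _ = exp s := mul_one _

theorem Real.Angle.coe_two_pi_mul_mod_div (m n : ℕ) :
    ((2 * π * ((m % n : ℕ) : ℝ) / n : ℝ) : Real.Angle) = (2 * π * m / n : ℝ) := by
  rcases Nat.eq_zero_or_pos n with rfl | hn
  · simp
  refine Real.Angle.angle_eq_iff_two_pi_dvd_sub.mpr ⟨-(m / n : ℕ), ?_⟩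
  have hdiv : ((m % n : ℕ) : ℝ) = m - n * (m / n : ℕ) := by
    rw [eq_sub_iff_add_eq, add_comm]; exact_mod_cast Nat.div_add_mod m n
  rw [hdiv, Int.cast_neg, Int.cast_natCast]
  field_simp
  ring

theorem exists_pos_le_abs_sub {ι : Type*} [Finite ι] {f : ι → ℝ} {τ : ℝ} (h : ∀ i, τ ≠ f i) :
    ∃ a, 0 < a ∧ ∀ i, a ≤ |f i - τ| := by
  rcases isEmpty_or_nonempty ι with _ | _
  · exact ⟨1, one_pos, isEmptyElim⟩
  · obtain ⟨i₀, hi₀⟩ := Finite.exists_min fun i => |f i - τ|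
    exact ⟨_, abs_pos.mpr (sub_ne_zero.mpr (h i₀).symm), hi₀⟩

section Laplacian

variable {ι : Type*} [Fintype ι] [DecidableEq ι]

theorem lap_mulVec_apply (M : Matrix ι ι ℝ) (x : ι → ℝ) (i : ι) :
    (lap M *ᵥ x) i = ∑ j, M i j * (x i - x j) := by
  rw [lap, Matrix.sub_mulVec, Pi.sub_apply, Matrix.mulVec_diagonal]
  simp [Matrix.mulVec, dotProduct, mul_sub, Finset.sum_mul]

theorem lap_isHermitian {M : Matrix ι ι ℝ} (hM : M.IsSymm) : (lap M).IsHermitian :=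
  (Matrix.isHermitian_diagonal _).sub (Matrix.isHermitian_iff_isSymm.mpr hM)

theorem dotProduct_lap_mulVec {M : Matrix ι ι ℝ} (hM : M.IsSymm) (x : ι → ℝ) :
    x ⬝ᵥ (lap M *ᵥ x) = (∑ i, ∑ j, M i j * (x i - x j) ^ 2) / 2 := by
  have hswap : ∑ i, ∑ j, M i j * (x i * (x i - x j))
      = ∑ i, ∑ j, M i j * (x j * (x j - x i)) := by
    rw [Finset.sum_comm]
    simp_rw [hM.apply]
  calc x ⬝ᵥ (lap M *ᵥ x) = ∑ i, ∑ j, M i j * (x i * (x i - x j)) := by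
        refine Finset.sum_congr rfl fun i _ => ?_
        rw [lap_mulVec_apply, Finset.mul_sum]
        exact Finset.sum_congr rfl fun j _ => by ring
    _ = (∑ i, ∑ j, M i j * (x i * (x i - x j))
          + ∑ i, ∑ j, M i j * (x j * (x j - x i))) / 2 := by
        rw [← hswap]; ring
    _ = (∑ i, ∑ j, M i j * (x i - x j) ^ 2) / 2 := by
        simp only [← Finset.sum_add_distrib]
        congr 1
        refine Finset.sum_congr rfl fun i _ => Finset.sum_congr rfl fun j _ => ?_
        ring

end Laplacian

open Fin.NatCast in
theorem sq_sub_le_mul_sum_sq_sub_succ {n : ℕ} [NeZero n] (x : Fin n → ℝ) (i j : Fin n) :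
    (x i - x j) ^ 2 ≤ n * ∑ k, (x k - x (k + 1)) ^ 2 := by
  set d : Fin n → ℝ := fun k => x (k + 1) - x k
  set m := ((j - i : Fin n) : ℕ)
  have hj : j = i + (m : Fin n) := by simp [m]
  have htel : x j - x i = ∑ l ∈ Finset.range m, d (i + l) := by
    have := Finset.sum_range_sub (fun l : ℕ => x (i + l)) m
    simp only [Nat.cast_succ, Nat.cast_zero, add_zero, ← add_assoc] at this
    rw [hj, ← this]
  have htv : |x i - x j| ≤ ∑ k, |d k| :=
    calc |x i - x j| = |∑ l ∈ Finset.range m, d (i + l)| := by rw [abs_sub_comm, htel]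
      _ ≤ ∑ l ∈ Finset.range m, |d (i + l)| := Finset.abs_sum_le_sum_abs _ _
      _ ≤ ∑ l ∈ Finset.range n, |d (i + l)| :=
          Finset.sum_le_sum_of_subset_of_nonneg (Finset.range_mono (j - i).isLt.le)
            fun _ _ _ => abs_nonneg _
      _ = ∑ k : Fin n, |d (i + k)| := by
          rw [← Fin.sum_univ_eq_sum_range (fun l => |d (i + l)|)]
          simp
      _ = ∑ k, |d k| := Fintype.sum_equiv (Equiv.addLeft i) _ _ fun _ => rfl
  calc (x i - x j) ^ 2 = |x i - x j| ^ 2 := (sq_abs _).symm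
    _ ≤ (∑ k, |d k|) ^ 2 := pow_le_pow_left₀ (abs_nonneg _) htv 2
    _ ≤ n * ∑ k, |d k| ^ 2 := by
        simpa using sq_sum_le_card_mul_sum_sq (s := Finset.univ) (f := fun k => |d k|)
    _ = n * ∑ k, (x k - x (k + 1)) ^ 2 := by
        simp only [sq_abs, d, sub_sq_comm (x (_ + 1))]

section CycleDominated

variable {n : ℕ} [NeZero n] {M : Matrix (Fin n) (Fin n) ℝ} {c δ : ℝ}

theorem mul_sum_sq_sub_succ_le_dotProduct_lap_mulVec (hM : M.IsSymm) (hδ : 0 ≤ δ)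
    (hcycle : ∀ i, c ≤ M i (i + 1)) (hlower : ∀ i j, -δ ≤ M i j) (x : Fin n → ℝ) :
    (c - δ * n ^ 3) / 2 * ∑ k, (x k - x (k + 1)) ^ 2 ≤ x ⬝ᵥ (lap M *ᵥ x) := by
  set E := ∑ k, (x k - x (k + 1)) ^ 2
  have hpair : ∀ i j, (if j = i + 1 then c else 0) * (x i - x j) ^ 2 - δ * (x i - x j) ^ 2
      ≤ M i j * (x i - x j) ^ 2 := by
    intro i j
    have hsq := sq_nonneg (x i - x j)
    split_ifs with hj
    · nlinarith [hj ▸ hcycle i, mul_nonneg hδ hsq]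
    · nlinarith [hlower i j]
  have hcyc : ∑ i, ∑ j, (if j = i + 1 then c else 0) * (x i - x j) ^ 2 = c * E := by
    simp [ite_mul, E, Finset.mul_sum]
  have hrest : ∑ i : Fin n, ∑ j : Fin n, δ * (x i - x j) ^ 2 ≤ δ * n ^ 3 * E :=
    calc ∑ i : Fin n, ∑ j : Fin n, δ * (x i - x j) ^ 2
        ≤ ∑ i : Fin n, ∑ j : Fin n, δ * (n * E) := by
          gcongr with i _ j _
          exact sq_sub_le_mul_sum_sq_sub_succ x i j
      _ = δ * n ^ 3 * E := by simp; ring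
  have hsum : ∑ i, ∑ j, ((if j = i + 1 then c else 0) * (x i - x j) ^ 2 - δ * (x i - x j) ^ 2)
      ≤ ∑ i, ∑ j, M i j * (x i - x j) ^ 2 :=
    Finset.sum_le_sum fun i _ => Finset.sum_le_sum fun j _ => hpair i j
  simp only [Finset.sum_sub_distrib, hcyc] at hsum
  rw [dotProduct_lap_mulVec hM]
  linarith

theorem lap_posSemidef_and_kernelIsConst (hM : M.IsSymm) (hδ : 0 ≤ δ) (hδc : δ * n ^ 3 < c)
    (hcycle : ∀ i, c ≤ M i (i + 1)) (hlower : ∀ i j, -δ ≤ M i j) :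
    (lap M).PosSemidef ∧ KernelIsConst (lap M) := by
  have hquad := mul_sum_sq_sub_succ_le_dotProduct_lap_mulVec hM hδ hcycle hlower
  have hE : ∀ x : Fin n → ℝ, 0 ≤ ∑ k, (x k - x (k + 1)) ^ 2 := fun x =>
    Finset.sum_nonneg fun k _ => sq_nonneg _
  have hcoef : 0 < (c - δ * n ^ 3) / 2 := by linarith
  refine ⟨Matrix.PosSemidef.of_dotProduct_mulVec_nonneg (lap_isHermitian hM) fun x => ?_,
    fun α => ⟨fun hα => ⟨α 0, fun k => ?_⟩, fun ⟨a, ha⟩ => ?_⟩⟩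
  · simpa using (mul_nonneg hcoef.le (hE x)).trans (hquad x)
  · have h0 : ∑ k, (α k - α (k + 1)) ^ 2 = 0 := by
      have := hquad α
      rw [hα, dotProduct_zero] at this
      nlinarith [hE α]
    have := sq_sub_le_mul_sum_sq_sub_succ α k 0
    rw [h0, mul_zero] at this
    nlinarith [sq_nonneg (α k - α 0)]
  · ext i
    simp [lap_mulVec_apply, ha]

end CycleDominated

theorem Mmat_isSymm {d : ℕ} {ι : Type*} [Fintype ι] {W : Matrix ι ι ℝ} (hW : W.IsSymm)
    (X : Matrix (Fin d) ι ℝ) (d1 d2 : ℝ → ℝ) : (Mmat W X d1 d2).IsSymm :=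
  Matrix.IsSymm.ext fun i j => by
    simp only [Mmat, Matrix.of_apply, hW.apply, Matrix.mul_apply, Matrix.transpose_apply,
      mul_comm (X _ j)]

def ngonAngle (n : ℕ) [NeZero n] : Fin n →+ Real.Angle :=
  AddMonoidHom.mk' (fun k => ((2 * π * k / n : ℝ) : Real.Angle)) fun a b => by
    rw [Fin.val_add, Real.Angle.coe_two_pi_mul_mod_div, ← Real.Angle.coe_add]
    congr 1
    push_cast
    ring

theorem ngonAngle_apply (n : ℕ) [NeZero n] (k : Fin n) :
    ngonAngle n k = ((2 * π * k / n : ℝ) : Real.Angle) := rfl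

theorem ngon_zero_apply (n : ℕ) [NeZero n] (k : Fin n) :
    ngon n 0 k = (ngonAngle n k).cos := by
  simp [ngon, ngonAngle_apply, Real.Angle.cos_coe]

theorem ngon_one_apply (n : ℕ) [NeZero n] (k : Fin n) :
    ngon n 1 k = (ngonAngle n k).sin := by
  simp [ngon, ngonAngle_apply, Real.Angle.sin_coe]

theorem ngon_gram_apply (n : ℕ) [NeZero n] (i j : Fin n) :
    ((ngon n)ᵀ * ngon n) i j = (ngonAngle n (i - j)).cos := by
  rw [map_sub, sub_eq_add_neg, Real.Angle.cos_add, Real.Angle.cos_neg, Real.Angle.sin_neg]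
  simp [Matrix.mul_apply, Fin.sum_univ_two, ngon_zero_apply, ngon_one_apply]

theorem ngon_gram_apply_add_one {n : ℕ} [NeZero n] (hn : 1 < n) (i : Fin n) :
    ((ngon n)ᵀ * ngon n) i (i + 1) = Real.cos (2 * π / n) := by
  rw [ngon_gram_apply, sub_add_cancel_left, map_neg, Real.Angle.cos_neg, ngonAngle_apply,
    Real.Angle.cos_coe, Fin.val_one', Nat.mod_eq_of_lt hn, Nat.cast_one, mul_one]

theorem mul_Smat_apply {d : ℕ} {ι : Type*} [Fintype ι] [DecidableEq ι] (W : Matrix ι ι ℝ)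
    (X : Matrix (Fin d) ι ℝ) (d1 : ℝ → ℝ) (a : Fin d) (j : ι) :
    (X * Smat W X d1) a j
      = X a j * ((Xᵀ * X) * Amat W X d1) j j - ∑ k, X a k * Amat W X d1 k j := by
  rw [Smat, Matrix.mul_sub, Matrix.sub_apply, ddiag, Matrix.mul_diagonal, Matrix.mul_apply]
  rfl

theorem sum_sin_ngonAngle_mul_eq_zero (n : ℕ) [NeZero n] (F : ℝ → ℝ) :
    ∑ k, (ngonAngle n k).sin * F (ngonAngle n k).cos = 0 := by
  have h := Equiv.sum_comp (Equiv.neg (Fin n))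
    fun k => (ngonAngle n k).sin * F (ngonAngle n k).cos
  simp only [Equiv.neg_apply, map_neg, Real.Angle.sin_neg, Real.Angle.cos_neg, neg_mul,
    Finset.sum_neg_distrib] at h
  linarith

theorem isCritical_ngon (n : ℕ) (d1 : ℝ → ℝ) :
    IsCritical (Matrix.of fun _ _ => (1 : ℝ)) (ngon n) d1 := by
  rcases n with _ | n
  · ext _ j; exact j.elim0
  set F : Fin (n + 1) → ℝ := fun k => d1 (ngonAngle (n + 1) k).cos
  have hA : ∀ k l, Amat (Matrix.of fun _ _ => (1 : ℝ)) (ngon (n + 1)) d1 k l = F (k - l) := by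
    simp [Amat, ngon_gram_apply, F]
  have hsin : ∑ k, (ngonAngle (n + 1) k).sin * F k = 0 := sum_sin_ngonAngle_mul_eq_zero _ d1
  ext a j
  have hdiag : ∑ k, (ngonAngle (n + 1) (j - k)).cos * F (k - j)
      = ∑ k, (ngonAngle (n + 1) k).cos * F k :=
    Fintype.sum_equiv (Equiv.subRight j) _ _ fun k => by
      rw [← neg_sub, map_neg, Real.Angle.cos_neg, Equiv.subRight_apply]
  have hrow : ∀ a, ∑ k, ngon (n + 1) a k * F (k - j) = ∑ k, ngon (n + 1) a (k + j) * F k :=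
    fun a => Fintype.sum_equiv (Equiv.subRight j) _ _ fun k => by simp
  rw [mul_Smat_apply, Matrix.zero_apply, sub_eq_zero, Matrix.mul_apply]
  simp only [hA, ngon_gram_apply, hdiag, hrow]
  fin_cases a
  · simp only [Fin.zero_eta, ngon_zero_apply, map_add, Real.Angle.cos_add, sub_mul,
      Finset.sum_sub_distrib, mul_right_comm _ (ngonAngle (n + 1) j).cos,
      mul_right_comm _ (ngonAngle (n + 1) j).sin, ← Finset.sum_mul, hsin]
    ring
  · simp only [Fin.mk_one, ngon_one_apply, map_add, Real.Angle.sin_add, add_mul,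
      Finset.sum_add_distrib, mul_right_comm _ (ngonAngle (n + 1) j).cos,
      mul_right_comm _ (ngonAngle (n + 1) j).sin, ← Finset.sum_mul, hsin]
    ring

section philse

variable {ε τ : ℝ}

theorem hasDerivAt_philse (hε : ε ≠ 0) (t : ℝ) :
    HasDerivAt (philse ε τ) (sigmoid ((t - τ) / ε)) t := by
  have hs : HasDerivAt (fun t => (t - τ) / ε) (1 / ε) t := by
    simpa using ((hasDerivAt_id t).sub_const τ).div_const ε
  refine (((hs.exp.const_add 1).log (by positivity)).const_mul ε).congr_deriv ?_
  rw [sigmoid_def, exp_neg]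
  field_simp
  ring

theorem deriv_philse (hε : ε ≠ 0) :
    deriv (philse ε τ) = fun t => sigmoid ((t - τ) / ε) :=
  funext fun t => (hasDerivAt_philse hε t).deriv

theorem deriv_deriv_philse (hε : ε ≠ 0) :
    deriv (deriv (philse ε τ))
      = fun t => sigmoid ((t - τ) / ε) * (1 - sigmoid ((t - τ) / ε)) / ε := by
  rw [deriv_philse hε]
  funext t
  have hs : HasDerivAt (fun t => (t - τ) / ε) (1 / ε) t := by
    simpa using ((hasDerivAt_id t).sub_const τ).div_const ε
  exact ((hasDerivAt_sigmoid _).comp t hs).deriv.trans (mul_one_div _ _)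

theorem deriv_deriv_philse_nonneg (hε : 0 < ε) (t : ℝ) :
    0 ≤ deriv (deriv (philse ε τ)) t := by
  rw [deriv_deriv_philse hε.ne']
  have := sigmoid_lt_one ((t - τ) / ε)
  have := sigmoid_pos ((t - τ) / ε)
  positivity

theorem deriv_deriv_philse_le (hε : 0 < ε) {a t : ℝ} (ha : 0 < a) (hgap : a ≤ |t - τ|) :
    deriv (deriv (philse ε τ)) t ≤ 2 * ε / a ^ 2 := by
  rw [deriv_deriv_philse hε.ne']
  have hs : a / ε ≤ |(t - τ) / ε| := by
    rw [abs_div, abs_of_pos hε]; gcongr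
  calc sigmoid ((t - τ) / ε) * (1 - sigmoid ((t - τ) / ε)) / ε
      ≤ 2 / (a / ε) ^ 2 / ε := by
        gcongr
        exact (sigmoid_mul_one_sub_sigmoid_le _).trans (exp_neg_le_two_div_sq (by positivity) hs)
    _ = 2 * ε / a ^ 2 := by field_simp

theorem deriv_philse_le (hε : 0 < ε) {a t : ℝ} (ha : 0 < a) (hta : t + a ≤ τ) :
    deriv (philse ε τ) t ≤ 2 * ε ^ 2 / a ^ 2 := by
  rw [deriv_philse hε.ne']
  have hs : a / ε ≤ -((t - τ) / ε) := by
    rw [← neg_div]; gcongr; linarith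
  calc sigmoid ((t - τ) / ε) ≤ exp (-(-((t - τ) / ε))) := by
        rw [neg_neg]; exact sigmoid_le_exp _
    _ ≤ 2 / (a / ε) ^ 2 := exp_neg_le_two_div_sq (by positivity) hs
    _ = 2 * ε ^ 2 / a ^ 2 := by field_simp

theorem half_le_deriv_philse (hε : 0 < ε) {t : ℝ} (ht : τ ≤ t) :
    1 / 2 ≤ deriv (philse ε τ) t := by
  rw [deriv_philse hε.ne', one_div, ← sigmoid_zero]
  exact sigmoid_le (div_nonneg (sub_nonneg.mpr ht) hε.le)

theorem sub_le_hfun {d1 d2 : ℝ → ℝ} {t : ℝ} (h2 : 0 ≤ d2 t) :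
    t * d1 t - d2 t ≤ hfun d1 d2 t := by
  unfold hfun
  nlinarith [mul_nonneg (sq_nonneg t) h2]

theorem hfun_philse_ge_of_le (hε : 0 < ε) (hε1 : ε ≤ 1) {a t : ℝ} (ha : 0 < a) (ht : -1 ≤ t)
    (hta : t + a ≤ τ) :
    -(4 * ε / a ^ 2) ≤ hfun (deriv (philse ε τ)) (deriv (deriv (philse ε τ))) t := by
  have hd1 : deriv (philse ε τ) t ≤ 2 * ε / a ^ 2 :=
    (deriv_philse_le hε ha hta).trans (by gcongr; nlinarith)
  have hd1' : 0 ≤ deriv (philse ε τ) t := by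
    rw [deriv_philse hε.ne']; exact sigmoid_nonneg _
  have hd2 : deriv (deriv (philse ε τ)) t ≤ 2 * ε / a ^ 2 :=
    deriv_deriv_philse_le hε ha (by rw [abs_of_neg (by linarith)]; linarith)
  have hmul : -deriv (philse ε τ) t ≤ t * deriv (philse ε τ) t := by
    nlinarith [mul_nonneg (by linarith : 0 ≤ t + 1) hd1']
  have hh := sub_le_hfun (d1 := deriv (philse ε τ)) (deriv_deriv_philse_nonneg (τ := τ) hε t)
  have h4 : 4 * ε / a ^ 2 = 2 * ε / a ^ 2 + 2 * ε / a ^ 2 := by ring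
  linarith

theorem hfun_philse_ge_of_ge (hε : 0 < ε) {a t : ℝ} (ha : 0 < a) (ht : 0 ≤ t)
    (hta : τ + a ≤ t) :
    t / 2 - 2 * ε / a ^ 2 ≤ hfun (deriv (philse ε τ)) (deriv (deriv (philse ε τ))) t := by
  have hd1 := half_le_deriv_philse hε (t := t) (by linarith)
  have hd2 : deriv (deriv (philse ε τ)) t ≤ 2 * ε / a ^ 2 :=
    deriv_deriv_philse_le hε ha (by rw [abs_of_pos (by linarith)]; linarith)
  have hh := sub_le_hfun (d1 := deriv (philse ε τ)) (deriv_deriv_philse_nonneg (τ := τ) hε t)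
  nlinarith

theorem hfun_philse_ge_of_gap (hε : 0 < ε) (hε1 : ε ≤ 1) (hτ : 0 ≤ τ) {a t : ℝ} (ha : 0 < a)
    (ht : -1 ≤ t) (hgap : a ≤ |t - τ|) :
    -(4 * ε / a ^ 2) ≤ hfun (deriv (philse ε τ)) (deriv (deriv (philse ε τ))) t := by
  rcases le_total t τ with htτ | htτ
  · rw [abs_of_nonpos (by linarith)] at hgap
    exact hfun_philse_ge_of_le hε hε1 ha ht (by linarith)
  · rw [abs_of_nonneg (by linarith)] at hgap
    have hh := hfun_philse_ge_of_ge hε ha (by linarith) (by linarith : τ + a ≤ t)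
    have hpos : 0 ≤ 2 * ε / a ^ 2 := by positivity
    have h4 : 4 * ε / a ^ 2 = 2 * (2 * ε / a ^ 2) := by ring
    linarith

end philse

theorem cos_two_pi_div_five_pos : 0 < Real.cos (2 * π / 5) :=
  Real.cos_pos_of_mem_Ioo ⟨by linarith [pi_pos], by linarith [pi_pos]⟩

theorem cos_two_pi_div_five_le_ngon_gram_apply_add_one {n : ℕ} [NeZero n] (hn : 5 ≤ n)
    (i : Fin n) : Real.cos (2 * π / 5) ≤ ((ngon n)ᵀ * ngon n) i (i + 1) := by
  rw [ngon_gram_apply_add_one (by omega)]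
  refine Real.cos_le_cos_of_nonneg_of_le_pi (by positivity) (by linarith [pi_pos]) ?_
  gcongr
  exact_mod_cast hn

theorem lap_Mmat_ngon_philse_posSemidef_and_kernelIsConst {n : ℕ} (hn : 5 ≤ n) {τ ε a : ℝ}
    (hτ0 : 0 ≤ τ) (hτ1 : τ < Real.cos (2 * π / 5)) (ha : 0 < a)
    (hgap : ∀ i : Fin n, a ≤ |Real.cos (2 * π * (i : ℝ) / n) - τ|) (hε : 0 < ε) (hε1 : ε ≤ 1)
    (hεa : 32 * n ^ 3 * ε ≤ Real.cos (2 * π / 5) * a ^ 2) :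
    (lap (Mmat (Matrix.of fun _ _ => (1 : ℝ)) (ngon n)
        (deriv (philse ε τ)) (deriv (deriv (philse ε τ))))).PosSemidef ∧
      KernelIsConst (lap (Mmat (Matrix.of fun _ _ => (1 : ℝ)) (ngon n)
        (deriv (philse ε τ)) (deriv (deriv (philse ε τ))))) := by
  have : NeZero n := ⟨by omega⟩
  have hn3 : (1 : ℝ) ≤ n ^ 3 := one_le_pow₀ (by exact_mod_cast (by omega : 1 ≤ n))
  have hgram : ∀ i j : Fin n,
      ((ngon n)ᵀ * ngon n) i j = Real.cos (2 * π * ((i - j : Fin n) : ℝ) / n) := fun i j => by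
    rw [ngon_gram_apply, ngonAngle_apply, Real.Angle.cos_coe]
  have hM : ∀ i j, Mmat (Matrix.of fun _ _ => (1 : ℝ)) (ngon n) (deriv (philse ε τ))
      (deriv (deriv (philse ε τ))) i j
        = hfun (deriv (philse ε τ)) (deriv (deriv (philse ε τ))) (((ngon n)ᵀ * ngon n) i j) :=
    fun i j => by simp [Mmat]
  have hcos := cos_two_pi_div_five_pos
  refine lap_posSemidef_and_kernelIsConst (Mmat_isSymm (Matrix.IsSymm.ext fun _ _ => rfl) _ _ _)
    (c := Real.cos (2 * π / 5) / 4) (δ := 4 * ε / a ^ 2) (by positivity) ?_ (fun i => ?_)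
    (fun i j => ?_)
  · rw [div_mul_eq_mul_div, div_lt_iff₀ (by positivity)]
    nlinarith [mul_pos hcos (pow_pos ha 2)]
  · have hnbr := cos_two_pi_div_five_le_ngon_gram_apply_add_one hn i
    have hgap' := hgap (i - (i + 1))
    rw [← hgram, abs_of_pos (by linarith)] at hgap'
    have hh := hfun_philse_ge_of_ge hε ha (by linarith) (by linarith : τ + a ≤ _)
    have : 2 * ε / a ^ 2 ≤ Real.cos (2 * π / 5) / 4 := by
      rw [div_le_iff₀ (by positivity)]
      nlinarith
    rw [hM]
    linarith
  · rw [hM]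
    refine hfun_philse_ge_of_gap hε hε1 hτ0 ha ?_ ?_
    · rw [hgram]; exact Real.neg_one_le_cos _
    · rw [hgram]; exact hgap (i - j)

/-- Lemma 4: for small enough `ε`, with the smoothed ReLU `φ_{ε,τ}`, the
regular `n`-gon remains critical with Laplacian `L(M)` positive semidefinite of kernel
exactly span(1). -/
theorem ngon_spurious_for_smoothed_relu
    {n : ℕ} (hn : 5 ≤ n)
    (τ : ℝ) (hτ0 : 0 ≤ τ) (hτ1 : τ < Real.cos (2 * Real.pi / 5))
    (hτne : ∀ i : Fin n, τ ≠ Real.cos (2 * Real.pi * (i : ℝ) / (n : ℝ))) :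
    ∃ ε₀ : ℝ, 0 < ε₀ ∧ ∀ ε : ℝ, 0 < ε → ε ≤ ε₀ →
      IsCritical (Matrix.of fun _ _ => (1 : ℝ)) (ngon n) (deriv (philse ε τ)) ∧
      (lap (Mmat (Matrix.of fun _ _ => (1 : ℝ)) (ngon n)
        (deriv (philse ε τ)) (deriv (deriv (philse ε τ))))).PosSemidef ∧
      KernelIsConst (lap (Mmat (Matrix.of fun _ _ => (1 : ℝ)) (ngon n)
        (deriv (philse ε τ)) (deriv (deriv (philse ε τ))))) := by
  obtain ⟨a, ha, hgap⟩ := exists_pos_le_abs_sub hτne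
  have hn0 : (0 : ℝ) < n := by exact_mod_cast (by omega : 0 < n)
  have hcos := cos_two_pi_div_five_pos
  refine ⟨min 1 (Real.cos (2 * π / 5) * a ^ 2 / (32 * n ^ 3)), by positivity,
    fun ε hε hεle => ⟨isCritical_ngon n _, ?_⟩⟩
  have hεa : 32 * n ^ 3 * ε ≤ Real.cos (2 * π / 5) * a ^ 2 := by
    have := hεle.trans (min_le_right _ _)
    rwa [le_div_iff₀ (by positivity), mul_comm] at this
  exact lap_Mmat_ngon_philse_posSemidef_and_kernelIsConst hn hτ0 hτ1 ha hgap hε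
    (hεle.trans (min_le_left _ _)) hεa
end
end

section
/- Fix d ≥ 2 and n ≥ 1, let φ(t) = t²/2 and W = 1_n 1_nᵀ. If X ∈ ℝ^{d×n} with unit-norm columns is critical for f and has negative-semidefinite Hessian, then no two columns of X are orthogonal: x_iᵀx_j ≠ 0 for all i, j. -/
open Matrix

noncomputable section

lemma sum_ite_pair {n : ℕ} {i j : Fin n} (hij : i ≠ j) (F G : Fin n → ℝ) :
    (∑ l, if l = i then F l else if l = j then G l else 0) = F i + G j := by
  have : (fun l => if l = i then F l else if l = j then G l else 0)
      = fun l => (if l = i then F l else 0) + (if l = j then G l else 0) := by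
    funext l
    by_cases h1 : l = i <;> by_cases h2 : l = j <;> simp_all
  rw [this, Finset.sum_add_distrib, Finset.sum_ite_eq', Finset.sum_ite_eq']
  simp


/-- for `φ(t) = t²/2` and the complete unit-weight graph, at a second-order
critical point no two columns are orthogonal. -/
theorem quadratic_no_orthogonal_columns
    {d n : ℕ} (hd : 2 ≤ d) (hn : 1 ≤ n)
    (X : Matrix (Fin d) (Fin n) ℝ) (hX : unitCols X)
    (hcrit : IsCritical (Matrix.of fun _ _ => (1 : ℝ)) X (deriv fun t => t ^ 2 / 2))
    (hhess : HessNegSemidef (Matrix.of fun _ _ => (1 : ℝ)) X (deriv fun t => t ^ 2 / 2)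
      (deriv (deriv fun t => t ^ 2 / 2))) :
    ∀ i j : Fin n, (Xᵀ * X) i j ≠ 0 := by
  have hd1 : deriv (fun t : ℝ => t ^ 2 / 2) = fun t => t := by
    funext t
    have h := (hasDerivAt_pow 2 t).div_const 2
    simpa using h.deriv
  have hd2 : deriv (deriv (fun t : ℝ => t ^ 2 / 2)) = fun _ => (1:ℝ) := by
    rw [hd1]; funext t; simp
  intro i j h0
  set G := Xᵀ * X with hGdef
  have hg : ∀ k l, G k l = ∑ a, X a k * X a l := by
    intro k l; simp [hGdef, Matrix.mul_apply]
  have hsym : ∀ k l, G k l = G l k := by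
    intro k l; rw [hg, hg]; exact Finset.sum_congr rfl fun a _ => mul_comm _ _
  have hdiag : ∀ k, G k k = 1 := by
    intro k; rw [hg]
    simpa [sq] using hX k
  have hij : i ≠ j := by
    rintro rfl; rw [hdiag] at h0; exact one_ne_zero h0
  have hji : G j i = 0 := (hsym j i).trans h0
  -- the perturbation swapping columns i and j
  set V : Matrix (Fin d) (Fin n) ℝ :=
    Matrix.of (fun a k => if k = i then X a j else if k = j then X a i else 0) with hVdef
  -- entry formulas
  have hXV : ∀ k l, (Xᵀ * V) k l = if l = i then G k j else if l = j then G k i else 0 := by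
    intro k l
    simp only [Matrix.mul_apply, hVdef, Matrix.of_apply, Matrix.transpose_apply]
    by_cases h1 : l = i
    · simp [h1, hg]
    · by_cases h2 : l = j <;> simp [h1, h2, hg]
  have hVX : ∀ k l, (Vᵀ * X) k l = if k = i then G j l else if k = j then G i l else 0 := by
    intro k l
    simp only [Matrix.mul_apply, hVdef, Matrix.of_apply, Matrix.transpose_apply]
    by_cases h1 : k = i
    · simp [h1, hg]
    · by_cases h2 : k = j <;> simp [h1, h2, hg]
  have e3 : ∑ a, X a i * X a j = 0 := by rw [← hg]; exact h0
  have e4 : ∑ a, X a j * X a i = 0 := by rw [← hg]; exact hji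
  have e1 : ∑ a, X a i * X a i = 1 := by rw [← hg]; exact hdiag i
  have e2 : ∑ a, X a j * X a j = 1 := by rw [← hg]; exact hdiag j
  have hVV : ∀ k l, (Vᵀ * V) k l =
      (if l = i ∧ k = i then 1 else 0) + (if l = j ∧ k = j then 1 else 0) := by
    intro k l
    have expand : (Vᵀ * V) k l = ∑ a, (if k = i then X a j else if k = j then X a i else 0)
        * (if l = i then X a j else if l = j then X a i else 0) := by
      simp [Matrix.mul_apply, hVdef]
    rw [expand]
    have hji' : j ≠ i := Ne.symm hij
    by_cases h1 : k = i
    · by_cases h3 : l = i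
      · simp [h1, h3, hij, hji', e2]
      · by_cases h4 : l = j
        · simp [h1, h4, hij, hji', e4]
        · simp [h1, h3, h4, hij, hji']
    · by_cases h2 : k = j
      · by_cases h3 : l = i
        · simp [h1, h2, h3, hij, hji', e3]
        · by_cases h4 : l = j
          · simp [h1, h2, h4, hij, hji', e1]
          · simp [h1, h2, h3, h4]
      · simp [h1, h2]
  have htan : ∀ k, (Xᵀ * V) k k = 0 := by
    intro k; rw [hXV]
    by_cases h1 : k = i
    · simp [h1, h0]
    · by_cases h2 : k = j <;> simp [h1, h2, hji, Ne.symm hij]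
  -- Amat is G itself
  have hA : Amat (Matrix.of fun _ _ => (1 : ℝ)) X (deriv fun t => t ^ 2 / 2) = G := by
    rw [Amat, hd1]
    ext k l; simp [Matrix.hadamard_apply, Matrix.map_apply, hGdef]
  have hS : ∀ k l, Smat (Matrix.of fun _ _ => (1 : ℝ)) X (deriv fun t => t ^ 2 / 2) k l
      = (if k = l then (G * G) k k else 0) - G k l := by
    intro k l
    rw [Smat, hA]
    simp [ddiag, Matrix.sub_apply, Matrix.diagonal_apply, hGdef]
  set lam : Fin n → ℝ := fun k => ∑ l, (G k l) ^ 2 with hlam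
  have hGG : ∀ k, (G * G) k k = lam k := by
    intro k
    rw [Matrix.mul_apply, hlam]
    exact Finset.sum_congr rfl fun l _ => by rw [hsym l k, sq]
  -- Term 1
  have hT1 : frob (Vᵀ * V) (Smat (Matrix.of fun _ _ => (1 : ℝ)) X (deriv fun t => t ^ 2 / 2))
      = lam i + lam j - 2 := by
    rw [frob]
    simp only [hVV, hS, add_mul, ite_mul, one_mul, zero_mul, Finset.sum_add_distrib, ite_and,
      Finset.sum_ite_eq', Finset.mem_univ, if_true]
    rw [hGG, hGG, hdiag, hdiag]
    ring
  -- Term 2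
  have hM2 : ∀ k l, Matrix.hadamard (Matrix.of fun _ _ => (1 : ℝ))
      (G.map (deriv (deriv fun t => t ^ 2 / 2))) k l = 1 := by
    intro k l; simp [Matrix.hadamard_apply, hd2, Matrix.map_apply]
  have hSa : ∑ k, ∑ l, (if l = i then G k j else if l = j then G k i else 0) ^ 2
      = lam i + lam j := by
    have inner : ∀ k, ∑ l, (if l = i then G k j else if l = j then G k i else 0) ^ 2
        = (G k j) ^ 2 + (G k i) ^ 2 := by
      intro k
      have : ∀ l, (if l = i then G k j else if l = j then G k i else 0) ^ 2
          = if l = i then (G k j) ^ 2 else if l = j then (G k i) ^ 2 else 0 := by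
        intro l; split_ifs <;> simp
      simp_rw [this]
      exact sum_ite_pair hij _ _
    simp_rw [inner]
    rw [Finset.sum_add_distrib]
    have c1 : ∑ k, (G k j) ^ 2 = lam j :=
      Finset.sum_congr rfl fun k _ => by rw [hsym k j]
    have c2 : ∑ k, (G k i) ^ 2 = lam i :=
      Finset.sum_congr rfl fun k _ => by rw [hsym k i]
    rw [c1, c2]; ring
  have hSb : ∑ k, ∑ l, (if k = i then G j l else if k = j then G i l else 0) ^ 2
      = lam i + lam j := by
    have inner : ∀ k : Fin n, ∑ l, (if k = i then G j l else if k = j then G i l else 0) ^ 2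
        = if k = i then lam j else if k = j then lam i else 0 := by
      intro k
      by_cases h1 : k = i
      · simp [h1, hlam]
      · by_cases h2 : k = j <;> simp [h1, h2, hlam]
    simp_rw [inner]
    rw [sum_ite_pair hij]; ring
  have hSab : ∑ k, ∑ l, ((if l = i then G k j else if l = j then G k i else 0)
      * (if k = i then G j l else if k = j then G i l else 0)) = 2 := by
    have inner : ∀ k : Fin n, ∑ l, ((if l = i then G k j else if l = j then G k i else 0)
        * (if k = i then G j l else if k = j then G i l else 0))
        = G k j * (if k = i then G j i else if k = j then G i i else 0)
          + G k i * (if k = i then G j j else if k = j then G i j else 0) := by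
      intro k
      have : ∀ l, ((if l = i then G k j else if l = j then G k i else 0)
          * (if k = i then G j l else if k = j then G i l else 0))
          = if l = i then G k j * (if k = i then G j i else if k = j then G i i else 0)
            else if l = j then G k i * (if k = i then G j j else if k = j then G i j else 0)
            else 0 := by
        intro l
        by_cases h1 : l = i
        · simp [h1, hij, Ne.symm hij]
        · by_cases h2 : l = j <;> simp [h1, h2, hij, Ne.symm hij]
      simp_rw [this]
      exact sum_ite_pair hij _ _
    simp_rw [inner]
    rw [Finset.sum_add_distrib]
    have p1 : ∀ k : Fin n, G k j * (if k = i then G j i else if k = j then G i i else 0)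
        = if k = i then G i j * G j i else if k = j then G j j * G i i else 0 := by
      intro k
      by_cases h1 : k = i
      · simp [h1, hij, Ne.symm hij]
      · by_cases h2 : k = j <;> simp [h1, h2, hij, Ne.symm hij]
    have p2 : ∀ k : Fin n, G k i * (if k = i then G j j else if k = j then G i j else 0)
        = if k = i then G i i * G j j else if k = j then G j i * G i j else 0 := by
      intro k
      by_cases h1 : k = i
      · simp [h1, hij, Ne.symm hij]
      · by_cases h2 : k = j <;> simp [h1, h2, hij, Ne.symm hij]
    simp_rw [p1, p2]
    rw [sum_ite_pair hij, sum_ite_pair hij, h0, hji, hdiag, hdiag]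
    ring
  have hT2 : frob ((Xᵀ * V + Vᵀ * X).map fun t => t ^ 2)
      (Matrix.hadamard (Matrix.of fun _ _ => (1 : ℝ))
        (G.map (deriv (deriv fun t => t ^ 2 / 2))))
      = 2 * lam i + 2 * lam j + 4 := by
    rw [frob]
    have entry : ∀ k l, ((Xᵀ * V + Vᵀ * X).map fun t => t ^ 2) k l
        * Matrix.hadamard (Matrix.of fun _ _ => (1 : ℝ))
          (G.map (deriv (deriv fun t => t ^ 2 / 2))) k l
        = (if l = i then G k j else if l = j then G k i else 0) ^ 2
          + (if k = i then G j l else if k = j then G i l else 0) ^ 2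
          + 2 * ((if l = i then G k j else if l = j then G k i else 0)
            * (if k = i then G j l else if k = j then G i l else 0)) := by
      intro k l
      rw [hM2, Matrix.map_apply, Matrix.add_apply, hXV, hVX]
      ring
    simp_rw [entry]
    rw [Finset.sum_congr rfl fun k _ => Finset.sum_add_distrib,
      Finset.sum_add_distrib,
      Finset.sum_congr rfl fun k _ => Finset.sum_add_distrib,
      Finset.sum_add_distrib]
    simp_rw [← Finset.mul_sum]
    rw [hSa, hSb, hSab]
    ring
  have hle := hhess V htan
  rw [hT1, hT2] at hle
  linarith
end
end

section
/- Fix d ≥ 2 and n ≥ 1, let φ(t) = t²/2 and W = 1_n 1_nᵀ. If X ∈ ℝ^{d×n} with unit-norm columns is critical for f and has negative-semidefinite Hessian, then rank(X) < d. -/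
open Matrix

noncomputable section

/-! With `φ(t) = t²/2` and all weights one, `A = XᵀX`, and criticality says that every column
`x_k` is an eigenvector of `XXᵀ`, with eigenvalue `μ_k = (XᵀXXᵀX)_kk`. Let `x_j` have the smallest
eigenvalue and test the Hessian in the direction that moves only `x_j`, along
`v = x_k − g x_j ⊥ x_j` where `g = ⟨x_j, x_k⟩`. Since `‖Xᵀv‖² = ⟨v, XXᵀv⟩ = μ_k (1 − g²)`, the
second-order condition reads `μ_k (1 − g²) ≤ (1 − g²)(μ_j − 1)`, i.e.
`(1 − g²)(μ_k − μ_j + 1) ≤ 0`, which forces `‖v‖² = 1 − g² = 0`. So every column is a multiple of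
`x_j`, and `rank X ≤ 1 < d`. -/

lemma deriv_sq_div_two : deriv (fun t : ℝ => t ^ 2 / 2) = fun t => t := by
  funext t
  rw [deriv_div_const, deriv_pow_field]
  ring

lemma deriv_deriv_sq_div_two : deriv (deriv fun t : ℝ => t ^ 2 / 2) = fun _ => 1 := by
  rw [deriv_sq_div_two]
  exact funext deriv_id

lemma unitCols.dotProduct_self {d : ℕ} {ι : Type*} [Fintype ι] {X : Matrix (Fin d) ι ℝ}
    (hX : unitCols X) (j : ι) : Xᵀ j ⬝ᵥ Xᵀ j = 1 := by
  simpa [dotProduct, sq] using hX j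

lemma col_eq_smul_col_of_forall_le {κ ι : Type*} [Fintype κ] [Fintype ι] {X : Matrix κ ι ℝ}
    {μ : ι → ℝ} (hunit : ∀ k, Xᵀ k ⬝ᵥ Xᵀ k = 1) (heig : ∀ k, (X * Xᵀ) *ᵥ Xᵀ k = μ k • Xᵀ k)
    (hhess : ∀ k v, Xᵀ k ⬝ᵥ v = 0 → (Xᵀ *ᵥ v) ⬝ᵥ (Xᵀ *ᵥ v) ≤ (v ⬝ᵥ v) * (μ k - 1))
    {j : ι} (hj : ∀ k, μ j ≤ μ k) (k : ι) :
    Xᵀ k = (Xᵀ j ⬝ᵥ Xᵀ k) • Xᵀ j := by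
  set g := Xᵀ j ⬝ᵥ Xᵀ k
  set v := Xᵀ k - g • Xᵀ j
  have hgj : Xᵀ j ⬝ᵥ Xᵀ k = g := rfl
  have hgk : Xᵀ k ⬝ᵥ Xᵀ j = g := dotProduct_comm _ _
  have hvj : Xᵀ j ⬝ᵥ v = 0 := by
    simp [v, dotProduct_sub, hunit, hgj]
  have hvv : v ⬝ᵥ v = 1 - g ^ 2 := by
    simp only [v, dotProduct_sub, sub_dotProduct, dotProduct_smul, smul_dotProduct, smul_eq_mul,
      hunit, hgj, hgk]
    ring
  have hXv : (Xᵀ *ᵥ v) ⬝ᵥ (Xᵀ *ᵥ v) = μ k * (1 - g ^ 2) := by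
    rw [mulVec_transpose, ← dotProduct_mulVec, ← mulVec_transpose, mulVec_mulVec]
    simp only [v, mulVec_sub, mulVec_smul, heig, dotProduct_sub, sub_dotProduct, dotProduct_smul,
      smul_dotProduct, smul_eq_mul, hunit, hgj, hgk]
    ring
  have hvv_nonneg : 0 ≤ v ⬝ᵥ v := by simpa using dotProduct_self_star_nonneg v
  have hvv_zero : v ⬝ᵥ v = 0 := by
    have hsecond := hhess j v hvj
    rw [hXv, hvv] at hsecond
    rw [hvv] at hvv_nonneg ⊢
    nlinarith [mul_nonneg hvv_nonneg (sub_nonneg.2 (hj k))]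
  exact sub_eq_zero.mp (dotProduct_self_eq_zero.mp hvv_zero)

section

variable {ι : Type*} [Fintype ι] [DecidableEq ι]

lemma frob_gram_vecMulVec_single {κ : Type*} [Fintype κ] (v : κ → ℝ) (j : ι)
    (S : Matrix ι ι ℝ) :
    frob ((vecMulVec v (Pi.single j 1))ᵀ * vecMulVec v (Pi.single j 1)) S = (v ⬝ᵥ v) * S j j := by
  rw [transpose_vecMulVec, vecMulVec_mul_vecMulVec]
  simp [frob, vecMulVec_apply, Pi.single_apply]

lemma sum_sq_vecMulVec_single_add (q : ι → ℝ) (j : ι) (hq : q j = 0) :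
    ∑ l, ∑ m, (vecMulVec q (Pi.single j 1) + vecMulVec (Pi.single j 1) q) l m ^ 2
      = 2 * (q ⬝ᵥ q) := by
  simp only [Matrix.add_apply, vecMulVec_apply, Pi.single_apply, mul_ite, mul_one, mul_zero,
    ite_mul, one_mul, zero_mul, add_sq, ite_pow, ne_eq, OfNat.ofNat_ne_zero, not_false_eq_true,
    zero_pow, Finset.sum_add_distrib, Finset.sum_ite_eq', Finset.mem_univ, ↓reduceIte,
    Finset.sum_ite_irrel, hq, Finset.sum_const_zero, ite_self, add_zero, dotProduct]
  simp only [sq]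
  ring

variable {d : ℕ}

lemma smat_ones_id (X : Matrix (Fin d) ι ℝ) :
    Smat (of fun _ _ => 1) X (fun t => t) = ddiag (Xᵀ * X * (Xᵀ * X)) - Xᵀ * X := by
  have hA : Amat (of fun _ _ => (1 : ℝ)) X (fun t => t) = Xᵀ * X := by
    ext
    simp [Amat]
  rw [Smat, hA]

lemma IsCritical.mulVec_col_eq_smul {X : Matrix (Fin d) ι ℝ}
    (h : IsCritical (of fun _ _ => 1) X fun t => t) (j : ι) :
    (X * Xᵀ) *ᵥ Xᵀ j = (Xᵀ * X * (Xᵀ * X)) j j • Xᵀ j := by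
  rw [IsCritical, smat_ones_id, Matrix.mul_sub, sub_eq_zero, ddiag] at h
  ext a
  have hcol := congrFun (congrFun h a) j
  rw [mul_diagonal, ← Matrix.mul_assoc X Xᵀ X] at hcol
  rw [Pi.smul_apply, smul_eq_mul, mul_comm]
  exact hcol.symm

lemma HessNegSemidef.apply_vecMulVec_single {X : Matrix (Fin d) ι ℝ}
    (h : HessNegSemidef (of fun _ _ => 1) X (fun t => t) fun _ => 1) {j : ι} {v : Fin d → ℝ}
    (hv : Xᵀ j ⬝ᵥ v = 0) :
    (Xᵀ *ᵥ v) ⬝ᵥ (Xᵀ *ᵥ v) ≤ (v ⬝ᵥ v) * ((Xᵀ * X * (Xᵀ * X)) j j - (Xᵀ * X) j j) := by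
  set V := vecMulVec v (Pi.single j (1 : ℝ))
  have hXV : Xᵀ * V = vecMulVec (Xᵀ *ᵥ v) (Pi.single j 1) := mul_vecMulVec _ _ _
  have hVX : Vᵀ * X = vecMulVec (Pi.single j 1) (Xᵀ *ᵥ v) := by
    rw [transpose_vecMulVec, vecMulVec_mul, mulVec_transpose]
  have htangent : ∀ l, (Xᵀ * V) l l = 0 := by
    intro l
    rw [hXV, vecMulVec_apply, Pi.single_apply]
    split_ifs with hl
    · subst hl
      rw [mul_one]
      exact hv
    · simp
  have hsq : frob ((Xᵀ * V + Vᵀ * X).map fun t => t ^ 2)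
      (hadamard (of fun _ _ => 1) ((Xᵀ * X).map fun _ => 1)) = 2 * ((Xᵀ *ᵥ v) ⬝ᵥ (Xᵀ *ᵥ v)) := by
    rw [hXV, hVX, ← sum_sq_vecMulVec_single_add _ j hv]
    simp [frob]
  have hform := h V htangent
  rw [frob_gram_vecMulVec_single, smat_ones_id, hsq] at hform
  simp only [ddiag, Matrix.sub_apply, diagonal_apply_eq] at hform
  linarith

lemma rank_le_one_of_isCritical_of_hessNegSemidef {X : Matrix (Fin d) ι ℝ} (hX : unitCols X)
    (hcrit : IsCritical (of fun _ _ => 1) X fun t => t)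
    (hhess : HessNegSemidef (of fun _ _ => 1) X (fun t => t) fun _ => 1) :
    X.rank ≤ 1 := by
  rcases isEmpty_or_nonempty ι with hι | hι
  · exact X.rank_le_card_width.trans (by simp)
  obtain ⟨j, -, hj⟩ := Finset.univ.exists_min_image (fun k => (Xᵀ * X * (Xᵀ * X)) k k)
    Finset.univ_nonempty
  have hgram_diag : ∀ k, (Xᵀ * X) k k = 1 := hX.dotProduct_self
  have hcol := col_eq_smul_col_of_forall_le hX.dotProduct_self hcrit.mulVec_col_eq_smul
    (fun k v hv => by simpa [hgram_diag] using hhess.apply_vecMulVec_single hv)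
    (fun k => hj k (Finset.mem_univ k))
  have hX_eq : X = vecMulVec (Xᵀ j) fun k => Xᵀ j ⬝ᵥ Xᵀ k := by
    ext a k
    simpa [vecMulVec_apply, mul_comm] using congrFun (hcol k) a
  rw [hX_eq]
  exact rank_vecMulVec_le _ _

end

theorem quadratic_rank_deficient_general
    {d n : ℕ} (hd : 2 ≤ d)
    (X : Matrix (Fin d) (Fin n) ℝ) (hX : unitCols X)
    (hcrit : IsCritical (Matrix.of fun _ _ => (1 : ℝ)) X (deriv fun t => t ^ 2 / 2))
    (hhess : HessNegSemidef (Matrix.of fun _ _ => (1 : ℝ)) X (deriv fun t => t ^ 2 / 2)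
      (deriv (deriv fun t => t ^ 2 / 2))) :
    X.rank < d := by
  rw [deriv_deriv_sq_div_two, deriv_sq_div_two] at hhess
  rw [deriv_sq_div_two] at hcrit
  have hrank := rank_le_one_of_isCritical_of_hessNegSemidef hX hcrit hhess
  omega

/-- for `φ(t) = t²/2` and the complete unit-weight graph, second-order
critical points are rank deficient: `rank(X) < d`. -/
theorem quadratic_rank_deficient
    {d n : ℕ} (hd : 2 ≤ d) (hn : 1 ≤ n)
    (X : Matrix (Fin d) (Fin n) ℝ) (hX : unitCols X)
    (hcrit : IsCritical (Matrix.of fun _ _ => (1 : ℝ)) X (deriv fun t => t ^ 2 / 2))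
    (hhess : HessNegSemidef (Matrix.of fun _ _ => (1 : ℝ)) X (deriv fun t => t ^ 2 / 2)
      (deriv (deriv fun t => t ^ 2 / 2))) :
    X.rank < d :=
  quadratic_rank_deficient_general hd X hX hcrit hhess
end
end
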